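/- arXiv:2207.02584 — 5 statements merged into one kernel-verified Lean document; each statement's English description precedes it below -/
import Mathlib

section
/- Let (f(n)) and (g(n)) be strictly increasing sequences of positive integers. For an integer l with 1 ≤ l < N, let J_l(N) denote the number of triples (x,y,z) of integers with 1 ≤ x < x+l ≤ z < y ≤ N satisfying f(x)+f(y) = f(x+l)+f(z) and g(x)+g(y) = g(x+l)+g(z). Then for every ε ∈ (0,1) there exists a constant C(ε) > 0, depending only on ε, such that for all N ≥ 2 the joint additive energy satisfies E(F_N;G_N) ≤ C(ε)·( N^{2+ε} + N^{ε}·Σ_{1 ≤ l ≤ N^{1−ε}} J_l(N) ). -/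
open scoped Classical

/-- Joint additive energy of the first `N` terms of the sequences `f` and `g`. -/
def jointEnergy2 (f g : ℕ → ℕ) (N : ℕ) : ℕ :=
  ((Finset.Icc 1 N ×ˢ Finset.Icc 1 N ×ˢ Finset.Icc 1 N ×ˢ Finset.Icc 1 N).filter fun q =>
    f q.1 + f q.2.1 = f q.2.2.1 + f q.2.2.2 ∧ g q.1 + g q.2.1 = g q.2.2.1 + g q.2.2.2).card

/-- The number of triples `(x, y, z)` with `1 ≤ x < x + l ≤ z < y ≤ N` satisfying
`f x + f y = f (x + l) + f z` and `g x + g y = g (x + l) + g z`. -/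
def Jcount (f g : ℕ → ℕ) (N l : ℕ) : ℕ :=
  ((Finset.Icc 1 N ×ˢ Finset.Icc 1 N ×ˢ Finset.Icc 1 N).filter fun q =>
    q.1 + l ≤ q.2.2 ∧ q.2.2 < q.2.1 ∧
      f q.1 + f q.2.1 = f (q.1 + l) + f q.2.2 ∧
      g q.1 + g q.2.1 = g (q.1 + l) + g q.2.2).card

/-!
Write `E(F_N; G_N) = ∑_c r(c)²`, where `r(c)` counts the pairs `(n, m) ∈ [1, N]²` with
`(f n + f m, g n + g m) = c`. Up to a factor 2 one may take `n ≤ m`, and then `n` determines the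
pair because `f` is injective. Cutting `[1, N]` into `N / H + 1` blocks of length
`H = ⌊N^(1-ε)⌋`, Cauchy–Schwarz bounds `r(c)²` by `N / H + 1` times the number of pairs of
representations of `c` whose first entries lie in a common block. Equal first entries contribute
`∑_c r(c) ≤ N²`; two representations `(x, y)`, `(x + l, z)` with `0 < l ≤ H` form a triple counted
by `J_l(N)`. Finally `N / H + 1 ≤ 3 N^ε`.
-/

open Finset

section FiberCounting

variable {α β : Type*} [DecidableEq β]

theorem card_filter_apply_eq_apply_eq_sum_sq (s : Finset α) {φ : α → β} {T : Finset β}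
    (hφ : Set.MapsTo φ s T) :
    #{x ∈ s ×ˢ s | φ x.1 = φ x.2} = ∑ c ∈ T, #{a ∈ s | φ a = c} ^ 2 := by
  rw [card_eq_sum_card_fiberwise (f := fun x : α × α => φ x.1) (t := T)
    fun x hx => hφ (mem_product.mp (mem_filter.mp hx).1).1]
  refine sum_congr rfl fun c _ => ?_
  rw [sq, ← card_product]
  congr 1
  ext x
  simp only [mem_filter, mem_product]
  constructor
  · rintro ⟨⟨⟨h1, h2⟩, h12⟩, rfl⟩
    exact ⟨⟨h1, rfl⟩, h2, h12.symm⟩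
  · rintro ⟨⟨h1, rfl⟩, h2, h12⟩
    exact ⟨⟨⟨h1, h2⟩, h12.symm⟩, rfl⟩

theorem sq_card_le_card_mul_card_filter_apply_eq_apply (s : Finset α) {b : α → β}
    {T : Finset β} (hb : Set.MapsTo b s T) :
    #s ^ 2 ≤ #T * #{x ∈ s ×ˢ s | b x.1 = b x.2} := by
  calc #s ^ 2 = (∑ t ∈ T, #{a ∈ s | b a = t}) ^ 2 := by rw [card_eq_sum_card_fiberwise hb]
    _ ≤ #T * ∑ t ∈ T, #{a ∈ s | b a = t} ^ 2 := sq_sum_le_card_mul_sum_sq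
    _ = #T * #{x ∈ s ×ˢ s | b x.1 = b x.2} := by
      rw [card_filter_apply_eq_apply_eq_sum_sq s hb]

theorem sq_card_le_of_injOn {u : Finset α} {k : α → ℕ} {N H : ℕ} (hH : 0 < H)
    (hk : Set.InjOn k u) (hkN : ∀ x ∈ u, k x ≤ N) :
    #u ^ 2 ≤ (N / H + 1) *
      (#u + 2 * #{x ∈ u ×ˢ u | k x.1 < k x.2 ∧ k x.2 ≤ k x.1 + H}) := by
  set close := {x ∈ u ×ˢ u | k x.1 < k x.2 ∧ k x.2 ≤ k x.1 + H}
  have hblock : Set.MapsTo (fun x => k x / H) u (range (N / H + 1)) := fun x hx =>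
    mem_range.mpr (Nat.lt_succ_of_le (Nat.div_le_div_right (hkN x hx)))
  have hsub :
      {x ∈ u ×ˢ u | k x.1 / H = k x.2 / H} ⊆ u.diag ∪ (close ∪ close.image Prod.swap) := by
    intro x hx
    simp only [mem_filter, mem_product] at hx
    obtain ⟨⟨h1, h2⟩, hq⟩ := hx
    have e1 := Nat.div_add_mod (k x.1) H
    have e2 := Nat.div_add_mod (k x.2) H
    have r1 := Nat.mod_lt (k x.1) hH
    have r2 := Nat.mod_lt (k x.2) hH
    rw [hq] at e1
    rcases lt_trichotomy (k x.1) (k x.2) with hlt | heq | hgt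
    · exact mem_union_right _ (mem_union_left _ (mem_filter.mpr ⟨mem_product.mpr ⟨h1, h2⟩,
        hlt, by omega⟩))
    · exact mem_union_left _ (mem_diag.mpr ⟨h1, hk h1 h2 heq⟩)
    · refine mem_union_right _ (mem_union_right _ (mem_image.mpr ⟨x.swap, ?_, Prod.swap_swap x⟩))
      exact mem_filter.mpr ⟨mem_product.mpr ⟨h2, h1⟩, hgt, by dsimp only [Prod.swap]; omega⟩
  calc #u ^ 2 ≤ #(range (N / H + 1)) * #{x ∈ u ×ˢ u | k x.1 / H = k x.2 / H} :=
        sq_card_le_card_mul_card_filter_apply_eq_apply u hblock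
    _ ≤ (N / H + 1) * (#u + 2 * #close) := by
      rw [card_range]
      gcongr
      calc _ ≤ #(u.diag ∪ (close ∪ close.image Prod.swap)) := card_le_card hsub
        _ ≤ #u.diag + (#close + #(close.image Prod.swap)) :=
          (card_union_le _ _).trans (Nat.add_le_add_left (card_union_le _ _) _)
        _ ≤ #u + 2 * #close := by
          rw [diag_card]
          have := card_image_le (s := close) (f := Prod.swap)
          omega

end FiberCounting

namespace JointEnergy

def pairSum (f g : ℕ → ℕ) (p : ℕ × ℕ) : ℕ × ℕ := (f p.1 + f p.2, g p.1 + g p.2)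

def grid (N : ℕ) : Finset (ℕ × ℕ) := Icc 1 N ×ˢ Icc 1 N

def reps (f g : ℕ → ℕ) (N : ℕ) (c : ℕ × ℕ) : Finset (ℕ × ℕ) := {p ∈ grid N | pairSum f g p = c}

def sortedReps (f g : ℕ → ℕ) (N : ℕ) (c : ℕ × ℕ) : Finset (ℕ × ℕ) :=
  {p ∈ reps f g N c | p.1 ≤ p.2}

variable {f g : ℕ → ℕ} {N : ℕ}

theorem mem_sortedReps {c p : ℕ × ℕ} :
    p ∈ sortedReps f g N c ↔
      (p.1 ∈ Icc 1 N ∧ p.2 ∈ Icc 1 N) ∧ pairSum f g p = c ∧ p.1 ≤ p.2 := by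
  simp only [sortedReps, reps, grid, mem_filter, mem_product, and_assoc]

theorem jointEnergy2_eq_sum_sq (f g : ℕ → ℕ) (N : ℕ) :
    jointEnergy2 f g N = ∑ c ∈ (grid N).image (pairSum f g), #(reps f g N c) ^ 2 := by
  calc jointEnergy2 f g N = #{x ∈ grid N ×ˢ grid N | pairSum f g x.1 = pairSum f g x.2} := by
        refine card_nbij' (fun q => ((q.1, q.2.1), (q.2.2.1, q.2.2.2)))
          (fun x => (x.1.1, x.1.2, x.2.1, x.2.2)) ?_ ?_ (fun _ _ => rfl) (fun _ _ => rfl)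
        · intro q hq
          simp only [mem_coe, mem_filter, mem_product, grid, pairSum, Prod.ext_iff] at hq ⊢
          tauto
        · intro x hx
          simp only [mem_coe, mem_filter, mem_product, grid, pairSum, Prod.ext_iff] at hx ⊢
          tauto
    _ = _ := card_filter_apply_eq_apply_eq_sum_sq _ fun p hp => mem_image_of_mem _ hp

theorem card_reps_le (f g : ℕ → ℕ) (N : ℕ) (c : ℕ × ℕ) :
    #(reps f g N c) ≤ 2 * #(sortedReps f g N c) := by
  have hsub : reps f g N c ⊆ sortedReps f g N c ∪ (sortedReps f g N c).image Prod.swap := by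
    intro p hp
    simp only [reps, grid, mem_filter, mem_product] at hp
    obtain ⟨⟨h1, h2⟩, hc⟩ := hp
    rcases le_total p.1 p.2 with hle | hge
    · exact mem_union_left _ (mem_sortedReps.mpr ⟨⟨h1, h2⟩, hc, hle⟩)
    · refine mem_union_right _ (mem_image.mpr ⟨p.swap, mem_sortedReps.mpr ⟨⟨h2, h1⟩, ?_, hge⟩,
        p.swap_swap⟩)
      rw [← hc]
      simp only [pairSum, Prod.fst_swap, Prod.snd_swap, add_comm]
  calc #(reps f g N c) ≤ #(sortedReps f g N c ∪ (sortedReps f g N c).image Prod.swap) :=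
        card_le_card hsub
    _ ≤ #(sortedReps f g N c) + #(sortedReps f g N c) :=
        (card_union_le _ _).trans (Nat.add_le_add_left card_image_le _)
    _ = 2 * #(sortedReps f g N c) := (two_mul _).symm

theorem fst_injOn_reps (hf : StrictMono f) (c : ℕ × ℕ) :
    Set.InjOn Prod.fst (reps f g N c : Set (ℕ × ℕ)) := by
  intro p hp q hq hpq
  simp only [reps, mem_coe, mem_filter] at hp hq
  have hsum : f p.1 + f p.2 = f q.1 + f q.2 := congrArg Prod.fst (hp.2.trans hq.2.symm)
  rw [hpq] at hsum
  exact Prod.ext hpq (hf.injective (by omega))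

theorem sum_card_sortedReps_le (f g : ℕ → ℕ) (N : ℕ) :
    ∑ c ∈ (grid N).image (pairSum f g), #(sortedReps f g N c) ≤ N ^ 2 := by
  calc ∑ c ∈ (grid N).image (pairSum f g), #(sortedReps f g N c)
      ≤ ∑ c ∈ (grid N).image (pairSum f g), #(reps f g N c) :=
        sum_le_sum fun c _ => card_filter_le _ _
    _ = #(grid N) := (card_eq_sum_card_image _ _).symm
    _ = N ^ 2 := by simp [grid, sq]

/-- `((x, y), (x + l, z)) ↦ (l, (x, y, z))` is injective: the class is recovered from `(x, y)`,
and then `z` determines `(x + l, z)`. -/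
theorem sum_card_closePairs_le_sum_Jcount (hf : StrictMono f) (H : ℕ) (T : Finset (ℕ × ℕ)) :
    ∑ c ∈ T, #{x ∈ sortedReps f g N c ×ˢ sortedReps f g N c |
        x.1.1 < x.2.1 ∧ x.2.1 ≤ x.1.1 + H} ≤
      ∑ l ∈ Icc 1 H, Jcount f g N l := by
  simp only [Jcount]
  rw [← card_sigma, ← card_sigma]
  refine card_le_card_of_injOn (fun y => ⟨y.2.2.1 - y.2.1.1, (y.2.1.1, y.2.1.2, y.2.2.2)⟩)
    ?_ ?_
  · rintro ⟨c, p, q⟩ hy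
    simp only [coe_sigma, Set.mem_sigma_iff, mem_coe, mem_filter, mem_product,
      mem_sortedReps] at hy
    obtain ⟨-, ⟨⟨hpN, hpc, hp⟩, hqN, hqc, hq⟩, hlt, hle⟩ := hy
    have hsum := hpc.trans hqc.symm
    simp only [pairSum, Prod.ext_iff] at hsum
    have hfq : f q.2 < f p.2 := by have := hf hlt; omega
    have hshift : p.1 + (q.1 - p.1) = q.1 := by omega
    simp only [coe_sigma, Set.mem_sigma_iff, mem_coe, mem_filter, mem_product, mem_Icc,
      hshift] at hpN hqN ⊢
    exact ⟨by omega, ⟨hpN.1, hpN.2, hqN.2⟩, hq, hf.lt_iff_lt.mp hfq, by omega, by omega⟩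
  · rintro ⟨c, p, q⟩ hy ⟨c', p', q'⟩ hy' h
    simp only [coe_sigma, Set.mem_sigma_iff, mem_coe, mem_filter, mem_product] at hy hy'
    obtain ⟨-, ⟨hp, hq⟩, hlt, -⟩ := hy
    obtain ⟨-, ⟨hp', hq'⟩, hlt', -⟩ := hy'
    simp only [Sigma.mk.injEq, Prod.mk.injEq, heq_eq_eq] at h
    obtain ⟨hl, h1, h2, -⟩ := h
    obtain rfl : p = p' := Prod.ext h1 h2
    obtain rfl : c = c' := (mem_sortedReps.mp hp).2.1.symm.trans (mem_sortedReps.mp hp').2.1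
    obtain rfl : q = q' := fst_injOn_reps hf c (filter_subset _ _ hq) (filter_subset _ _ hq')
      (by omega)
    rfl

theorem jointEnergy2_le (hf : StrictMono f) {H : ℕ} (hH : 0 < H) :
    jointEnergy2 f g N ≤ (N / H + 1) * (4 * N ^ 2 + 8 * ∑ l ∈ Icc 1 H, Jcount f g N l) := by
  set T := (grid N).image (pairSum f g)
  set close := fun c => #{x ∈ sortedReps f g N c ×ˢ sortedReps f g N c |
    x.1.1 < x.2.1 ∧ x.2.1 ≤ x.1.1 + H}
  have hK : ∀ c ∈ T, #(sortedReps f g N c) ^ 2 ≤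
      (N / H + 1) * (#(sortedReps f g N c) + 2 * close c) := fun c _ =>
    sq_card_le_of_injOn hH ((fst_injOn_reps hf c).mono (filter_subset _ _))
      fun p hp => (mem_Icc.mp (mem_sortedReps.mp hp).1.1).2
  calc jointEnergy2 f g N = ∑ c ∈ T, #(reps f g N c) ^ 2 := jointEnergy2_eq_sum_sq f g N
    _ ≤ ∑ c ∈ T, 4 * #(sortedReps f g N c) ^ 2 := sum_le_sum fun c _ => by
        have := card_reps_le f g N c
        nlinarith
    _ ≤ ∑ c ∈ T, 4 * ((N / H + 1) * (#(sortedReps f g N c) + 2 * close c)) :=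
        sum_le_sum fun c hc => Nat.mul_le_mul_left 4 (hK c hc)
    _ = (N / H + 1) * (4 * ∑ c ∈ T, #(sortedReps f g N c) + 8 * ∑ c ∈ T, close c) := by
        rw [mul_sum, mul_sum, ← sum_add_distrib, mul_sum]
        exact sum_congr rfl fun c _ => by ring
    _ ≤ (N / H + 1) * (4 * N ^ 2 + 8 * ∑ l ∈ Icc 1 H, Jcount f g N l) := by
        gcongr
        · exact sum_card_sortedReps_le f g N
        · exact sum_card_closePairs_le_sum_Jcount hf H T

theorem cast_div_floor_rpow_add_one_le {N : ℕ} {ε : ℝ} (hN : 0 < N) (hε : 0 ≤ ε)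
    (hH : 0 < ⌊(N : ℝ) ^ (1 - ε)⌋₊) :
    ((N / ⌊(N : ℝ) ^ (1 - ε)⌋₊ + 1 : ℕ) : ℝ) ≤ 3 * (N : ℝ) ^ ε := by
  set H := ⌊(N : ℝ) ^ (1 - ε)⌋₊
  have hNpos : (0 : ℝ) < N := Nat.cast_pos.mpr hN
  have hsplit : (N : ℝ) = (N : ℝ) ^ (1 - ε) * (N : ℝ) ^ ε := by
    rw [← Real.rpow_add hNpos, sub_add_cancel, Real.rpow_one]
  have hfloor : (N : ℝ) ^ (1 - ε) ≤ 2 * H := by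
    have := Nat.lt_floor_add_one ((N : ℝ) ^ (1 - ε))
    have : (1 : ℝ) ≤ H := Nat.one_le_cast.mpr hH
    linarith
  have hdiv : ((N / H : ℕ) : ℝ) ≤ 2 * (N : ℝ) ^ ε := by
    refine Nat.cast_div_le.trans ((div_le_iff₀ (Nat.cast_pos.mpr hH)).mpr ?_)
    nlinarith [Real.rpow_nonneg hNpos.le ε]
  have hone : (1 : ℝ) ≤ (N : ℝ) ^ ε := Real.one_le_rpow (Nat.one_le_cast.mpr hN) hε
  push_cast
  linarith

end JointEnergy

theorem stmt8 :
    ∀ ε : ℝ, 0 < ε → ε < 1 →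
      ∃ C : ℝ, 0 < C ∧
        ∀ f g : ℕ → ℕ, StrictMono f → StrictMono g → (∀ n, 0 < f n) → (∀ n, 0 < g n) →
          ∀ N : ℕ, 2 ≤ N →
            (jointEnergy2 f g N : ℝ) ≤
              C * ((N : ℝ) ^ ((2 : ℝ) + ε) +
                (N : ℝ) ^ ε * ∑ l ∈ Finset.Icc 1 ⌊(N : ℝ) ^ ((1 : ℝ) - ε)⌋₊,
                  (Jcount f g N l : ℝ)) := by
  intro ε hε hε1
  refine ⟨24, by norm_num, fun f g hf _ _ _ N hN => ?_⟩
  set H := ⌊(N : ℝ) ^ (1 - ε)⌋₊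
  have hN1 : (1 : ℝ) ≤ N := Nat.one_le_cast.mpr (by omega)
  have hH : 0 < H := Nat.floor_pos.mpr (Real.one_le_rpow hN1 (by linarith))
  have hK := JointEnergy.cast_div_floor_rpow_add_one_le (by omega) hε.le hH
  have hE : (jointEnergy2 f g N : ℝ) ≤ ((N / H + 1 : ℕ) : ℝ) *
      (4 * (N : ℝ) ^ 2 + 8 * ∑ l ∈ Icc 1 H, (Jcount f g N l : ℝ)) := by
    exact_mod_cast JointEnergy.jointEnergy2_le (g := g) (N := N) hf hH
  set J := ∑ l ∈ Icc 1 H, (Jcount f g N l : ℝ)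
  have hpow : (N : ℝ) ^ ((2 : ℝ) + ε) = (N : ℝ) ^ 2 * (N : ℝ) ^ ε := by
    rw [Real.rpow_add (by positivity), Real.rpow_two]
  have hJ : 0 ≤ J := sum_nonneg fun l _ => Nat.cast_nonneg _
  calc (jointEnergy2 f g N : ℝ) ≤ 3 * (N : ℝ) ^ ε * (4 * (N : ℝ) ^ 2 + 8 * J) :=
        hE.trans (mul_le_mul_of_nonneg_right hK (by positivity))
    _ ≤ 24 * ((N : ℝ) ^ ((2 : ℝ) + ε) + (N : ℝ) ^ ε * J) := by
        rw [hpow]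
        nlinarith [Real.rpow_nonneg (Nat.cast_nonneg N) ε, sq_nonneg (N : ℝ)]
end

section
/- There exists an absolute constant C > 0 with the following property. Let N ≥ 2 and 1 ≤ l < N be integers, and let F : ℝ → ℝ be three times continuously differentiable on the segment [1,N] with F′(x) > 0, F″(x) > 0 and F‴(x) < 0 for all x ∈ [1,N]. Then the number of pairs (n,m) of integers with 1 ≤ n < n+l ≤ m < m+l ≤ N satisfying ⌊F(n)⌋ + ⌊F(m+l)⌋ = ⌊F(n+l)⌋ + ⌊F(m)⌋ is at most C·N·( 2/(l·F″(N)) + 1 ). -/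
open scoped Classical

/-! Because `F''' < 0`, `F''` is at least `c = F''(N)` on `[1, N]`, so the forward difference
`Δ_l F x = F (x + l) - F x` grows at rate at least `l c`. The floor identity says
`Δ_l F m - Δ_l F n < 2`, hence `m - n < 2 / (l c)`: each `n` has at most `2 / (l c)` partners. -/

open Finset fwdDiff

theorem card_le_mul_of_forall_lt_add (S : Finset (ℕ × ℕ)) {N : ℕ} {T : ℝ} (hT : 0 ≤ T)
    (hS : ∀ p ∈ S, p.1 ∈ Finset.Icc 1 N ∧ p.1 < p.2 ∧ (p.2 : ℝ) < p.1 + T) :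
    (#S : ℝ) ≤ N * T := by
  have hcard : #S ≤ N * ⌊T⌋₊ :=
    calc #S ≤ #(Finset.Icc 1 N ×ˢ Finset.Icc 1 ⌊T⌋₊) := by
          refine card_le_card_of_injOn (fun p => (p.1, p.2 - p.1)) (fun p hp => ?_) ?_
          · obtain ⟨hn, hnm, hmT⟩ := hS p hp
            have : (p.2 : ℝ) < p.1 + ⌊T⌋₊ + 1 := by linarith [Nat.lt_floor_add_one T]
            have : p.2 < p.1 + ⌊T⌋₊ + 1 := by exact_mod_cast this
            simp only [coe_product, Set.mem_prod, mem_coe, Finset.mem_Icc]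
            exact ⟨Finset.mem_Icc.1 hn, by omega, by omega⟩
          · intro p hp q hq hpq
            have := (hS p hp).2.1
            have := (hS q hq).2.1
            simp only [Prod.mk.injEq] at hpq
            ext <;> omega
      _ = N * ⌊T⌋₊ := by simp
  calc (#S : ℝ) ≤ N * ⌊T⌋₊ := by exact_mod_cast hcard
    _ ≤ N * T := by gcongr; exact Nat.floor_le hT

theorem lt_add_div_of_floor_add_floor_eq {f : ℝ → ℝ} {h K x y : ℝ} (hK : 0 < K)
    (hgrowth : K * (y - x) ≤ Δ_[h] f y - Δ_[h] f x)
    (hfloor : ⌊f x⌋ + ⌊f (y + h)⌋ = ⌊f (x + h)⌋ + ⌊f y⌋) : y < x + 2 / K := by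
  have hfloor' : (⌊f x⌋ + ⌊f (y + h)⌋ : ℝ) = ⌊f (x + h)⌋ + ⌊f y⌋ := by exact_mod_cast hfloor
  have : (y - x) * K < 2 := by
    simp only [fwdDiff] at hgrowth
    linarith [Int.lt_floor_add_one (f x), Int.lt_floor_add_one (f (y + h)),
      Int.floor_le (f (x + h)), Int.floor_le (f y)]
  linarith [(lt_div_iff₀ hK).2 this]

theorem Convex.mul_sub_le_fwdDiff_sub_of_le_deriv {D : Set ℝ} (hD : Convex ℝ D) {f : ℝ → ℝ}
    {h C : ℝ} (hf : ∀ x ∈ D, DifferentiableAt ℝ f x) (hfh : ∀ x ∈ D, DifferentiableAt ℝ f (x + h))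
    (hC : ∀ x ∈ D, C ≤ deriv f (x + h) - deriv f x) {x y : ℝ} (hx : x ∈ D) (hy : y ∈ D)
    (hxy : x ≤ y) : C * (y - x) ≤ Δ_[h] f y - Δ_[h] f x := by
  have hderiv : ∀ x ∈ D, HasDerivAt (Δ_[h] f) (deriv f (x + h) - deriv f x) x := fun x hx =>
    ((hfh x hx).hasDerivAt.comp_add_const x h).sub (hf x hx).hasDerivAt
  refine hD.mul_sub_le_image_sub_of_le_deriv
    (fun x hx => (hderiv x hx).continuousAt.continuousWithinAt)
    (fun x hx => (hderiv x (interior_subset hx)).differentiableAt.differentiableWithinAt)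
    (fun x hx => ?_) x hx y hy hxy
  rw [(hderiv x (interior_subset hx)).deriv]
  exact hC x (interior_subset hx)

section Icc

variable {F : ℝ → ℝ} {a b h : ℝ}

theorem mul_le_fwdDiff_deriv_of_antitoneOn {x : ℝ}
    (hF : ∀ x ∈ Set.Icc a b, DifferentiableAt ℝ (deriv F) x)
    (hanti : AntitoneOn (deriv (deriv F)) (Set.Icc a b)) (hh : 0 ≤ h)
    (hx : x ∈ Set.Icc a (b - h)) :
    h * deriv (deriv F) b ≤ deriv F (x + h) - deriv F x := by
  have hxI : x ∈ Set.Icc a b := ⟨hx.1, by linarith [hx.2]⟩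
  have hxhI : x + h ∈ Set.Icc a b := ⟨by linarith [hx.1], by linarith [hx.2]⟩
  have hb : b ∈ Set.Icc a b := ⟨hxI.1.trans hxI.2, le_rfl⟩
  have := (convex_Icc a b).mul_sub_le_image_sub_of_le_deriv
    (fun y hy => (hF y hy).continuousAt.continuousWithinAt)
    (fun y hy => (hF y (interior_subset hy)).differentiableWithinAt)
    (fun y hy => hanti (interior_subset hy) hb (interior_subset hy).2) x hxI (x + h) hxhI
    (by linarith)
  rwa [add_sub_cancel_left, mul_comm] at this

theorem mul_sub_le_fwdDiff_sub_of_antitoneOn (hh : 0 ≤ h)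
    (hF : ∀ x ∈ Set.Icc a b, DifferentiableAt ℝ F x)
    (hF' : ∀ x ∈ Set.Icc a b, DifferentiableAt ℝ (deriv F) x)
    (hanti : AntitoneOn (deriv (deriv F)) (Set.Icc a b)) {x y : ℝ}
    (hx : x ∈ Set.Icc a (b - h)) (hy : y ∈ Set.Icc a (b - h)) (hxy : x ≤ y) :
    h * deriv (deriv F) b * (y - x) ≤ Δ_[h] F y - Δ_[h] F x :=
  (convex_Icc _ _).mul_sub_le_fwdDiff_sub_of_le_deriv
    (fun z hz => hF z ⟨hz.1, by linarith [hz.2]⟩)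
    (fun z hz => hF (z + h) ⟨by linarith [hz.1], by linarith [hz.2]⟩)
    (fun z hz => mul_le_fwdDiff_deriv_of_antitoneOn hF' hanti hh hz) hx hy hxy

end Icc

theorem stmt9 :
    ∃ C : ℝ, 0 < C ∧
      ∀ (N l : ℕ), 2 ≤ N → 1 ≤ l → l < N →
        ∀ F : ℝ → ℝ, ContDiffOn ℝ 3 F (Set.Icc 1 N) →
          (∀ x ∈ Set.Icc (1 : ℝ) N, 0 < deriv F x) →
          (∀ x ∈ Set.Icc (1 : ℝ) N, 0 < iteratedDeriv 2 F x) →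
          (∀ x ∈ Set.Icc (1 : ℝ) N, iteratedDeriv 3 F x < 0) →
          (((Finset.Icc 1 N ×ˢ Finset.Icc 1 N).filter fun p =>
              p.1 + l ≤ p.2 ∧ p.2 + l ≤ N ∧
                ⌊F p.1⌋ + ⌊F ((p.2 : ℝ) + l)⌋ = ⌊F ((p.1 : ℝ) + l)⌋ + ⌊F p.2⌋).card : ℝ) ≤
            C * N * (2 / (l * iteratedDeriv 2 F N) + 1) := by
  refine ⟨1, one_pos, fun N l hN hl hlN F _ hF1 hF2 hF3 => ?_⟩
  simp only [iteratedDeriv_eq_iterate, Function.iterate_succ_apply', Function.iterate_zero_apply]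
    at hF2 hF3 ⊢
  -- A nonzero `deriv` certifies differentiability, so the sign conditions carry all regularity.
  have hanti : AntitoneOn (deriv (deriv F)) (Set.Icc 1 N) :=
    (strictAntiOn_of_deriv_neg (convex_Icc _ _)
      (fun x hx => (differentiableAt_of_deriv_ne_zero (hF3 x hx).ne).continuousAt.continuousWithinAt)
      (fun x hx => hF3 x (interior_subset hx))).antitoneOn
  set K := l * deriv (deriv F) N
  have hK : 0 < K := mul_pos (by positivity) (hF2 N ⟨by exact_mod_cast (by omega : 1 ≤ N), le_rfl⟩)
  have hmem : ∀ k : ℕ, 1 ≤ k → k + l ≤ N → (k : ℝ) ∈ Set.Icc (1 : ℝ) (N - l) := fun k hk hkN =>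
    ⟨by exact_mod_cast hk, by rw [le_sub_iff_add_le]; exact_mod_cast hkN⟩
  calc _ ≤ N * (2 / K) := by
        refine card_le_mul_of_forall_lt_add _ (by positivity) fun p hp => ?_
        simp only [Finset.mem_filter, Finset.mem_product] at hp
        obtain ⟨⟨hn, -⟩, hnm, hmN, hfloor⟩ := hp
        refine ⟨hn, by omega, lt_add_div_of_floor_add_floor_eq hK ?_ hfloor⟩
        exact mul_sub_le_fwdDiff_sub_of_antitoneOn (by positivity)
          (fun x hx => differentiableAt_of_deriv_ne_zero (hF1 x hx).ne')
          (fun x hx => differentiableAt_of_deriv_ne_zero (hF2 x hx).ne') hanti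
          (hmem _ (Finset.mem_Icc.1 hn).1 (by omega)) (hmem _ (by omega) hmN)
          (by exact_mod_cast (by omega : p.1 ≤ p.2))
    _ ≤ 1 * N * (2 / K + 1) := by nlinarith
end

section
/- For every ε ∈ (0,1) there exists a constant C(ε) > 0, depending only on ε, with the following property. Let N ≥ 2 be an integer and let F : ℝ → ℝ be three times continuously differentiable on the segment [1,N] with F′(x) > 0, F″(x) > 0 and F‴(x) < 0 for all x ∈ [1,N]. Then #{(n,m,k,l) ∈ {1,…,N}^4 : n + m = k + l and ⌊F(n)⌋ + ⌊F(m)⌋ = ⌊F(k)⌋ + ⌊F(l)⌋} ≤ C(ε)·( N^{2+ε} + N^{1+ε}·(log N)/F″(N) ). -/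
/-!
A solution of `n + m = k + l` has the shape `(l + h, l + d, l + h + d, l)` with signed `h, d`.
Since `F''' < 0`, `F'' ≥ F''(N)` on `[1, N]`, and integrating `F''` over the rectangle
`[l, l + h] × [0, d]` gives `|F k + F l - F n - F m| ≥ F''(N) |h| |d|`. Equal floor sums force
this second difference below `2`, so `(|h|, |d|)` lies under the hyperbola `x y = 2 / F''(N)`,
which contains `O(N + log N / F''(N))` lattice points of `[0, N)²`; there are `N` choices of `l`.
-/

open Finset

lemma mul_sub_le_sub_of_le_deriv {f : ℝ → ℝ} {p q C : ℝ} (hpq : p ≤ q)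
    (hf : ∀ t ∈ Set.Icc p q, DifferentiableAt ℝ f t)
    (hC : ∀ t ∈ Set.Icc p q, C ≤ deriv f t) :
    C * (q - p) ≤ f q - f p :=
  (convex_Icc p q).mul_sub_le_image_sub_of_le_deriv
    (fun t ht => (hf t ht).continuousAt.continuousWithinAt)
    (fun t ht => (hf t (interior_subset ht)).differentiableWithinAt)
    (fun t ht => hC t (interior_subset ht)) p (Set.left_mem_Icc.2 hpq) q
    (Set.right_mem_Icc.2 hpq) hpq

lemma strictAntiOn_iteratedDeriv_two {F : ℝ → ℝ} {a b : ℝ}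
    (h3 : ∀ x ∈ Set.Icc a b, iteratedDeriv 3 F x < 0) :
    StrictAntiOn (iteratedDeriv 2 F) (Set.Icc a b) := by
  rw [iteratedDeriv_succ] at h3
  refine strictAntiOn_of_deriv_neg (convex_Icc a b) (fun x hx => ?_)
    (fun x hx => h3 x (interior_subset hx))
  exact (differentiableAt_of_deriv_ne_zero (h3 x hx).ne).continuousAt.continuousWithinAt

section SecondDifference

variable {F : ℝ → ℝ} {a b B : ℝ}

/-- Integrate `F'' ≥ B` over `[x, y] × [x, z]`: with `d = z - x`, the function
`u ↦ F (u + d) - F u` has derivative at least `B * d` on `[x, y]`. -/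
lemma mul_mul_le_second_difference (hF : ∀ t ∈ Set.Icc a b, DifferentiableAt ℝ F t)
    (hF' : ∀ t ∈ Set.Icc a b, DifferentiableAt ℝ (deriv F) t)
    (hB : ∀ t ∈ Set.Icc a b, B ≤ deriv (deriv F) t)
    {x y z w : ℝ} (hx : a ≤ x) (hxy : x ≤ y) (hxz : x ≤ z) (hw : w ≤ b) (hsum : y + z = w + x) :
    B * (y - x) * (z - x) ≤ F w + F x - F y - F z := by
  set d := z - x
  have hmem : ∀ t ∈ Set.Icc x w, t ∈ Set.Icc a b := fun t ht => ⟨hx.trans ht.1, ht.2.trans hw⟩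
  have hshift : ∀ t ∈ Set.Icc x y, Set.Icc t (t + d) ⊆ Set.Icc x w :=
    fun t ht => Set.Icc_subset_Icc ht.1 (by linarith [ht.2])
  have hdiff : ∀ t ∈ Set.Icc x y,
      DifferentiableAt ℝ (fun u => F (u + d)) t ∧ DifferentiableAt ℝ F t := fun t ht =>
    ⟨differentiableAt_comp_add_const.2 (hF _ (hmem _ (hshift t ht ⟨by linarith, le_rfl⟩))),
      hF _ (hmem _ (hshift t ht ⟨le_rfl, by linarith⟩))⟩
  have hslope : ∀ t ∈ Set.Icc x y, B * d ≤ deriv (fun u => F (u + d) - F u) t := by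
    intro t ht
    rw [deriv_fun_sub (hdiff t ht).1 (hdiff t ht).2, deriv_comp_add_const]
    linarith [mul_sub_le_sub_of_le_deriv (by linarith)
      (fun u hu => hF' u (hmem u (hshift t ht hu))) (fun u hu => hB u (hmem u (hshift t ht hu)))]
  have := mul_sub_le_sub_of_le_deriv (f := fun u => F (u + d) - F u) hxy
    (fun t ht => (hdiff t ht).1.sub (hdiff t ht).2) hslope
  rw [show y + d = w by linarith, show x + d = z by ring] at this
  linarith

lemma mul_abs_mul_abs_le_abs_second_difference
    (hF : ∀ t ∈ Set.Icc a b, DifferentiableAt ℝ F t)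
    (hF' : ∀ t ∈ Set.Icc a b, DifferentiableAt ℝ (deriv F) t)
    (hB : ∀ t ∈ Set.Icc a b, B ≤ deriv (deriv F) t)
    {n m k l : ℝ} (hn : n ∈ Set.Icc a b) (hm : m ∈ Set.Icc a b) (hk : k ∈ Set.Icc a b)
    (hl : l ∈ Set.Icc a b) (hsum : n + m = k + l) :
    B * |n - l| * |m - l| ≤ |F k + F l - F n - F m| := by
  have hle := neg_abs_le (F k + F l - F n - F m)
  have hge := le_abs_self (F k + F l - F n - F m)
  -- the smallest of the four points plays the role of `x`
  by_cases hn_min : n ≤ k ∧ n ≤ l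
  · have := mul_mul_le_second_difference hF hF' hB hn.1 hn_min.1 hn_min.2 hm.2 (by linarith)
    rw [abs_of_nonpos (by linarith : n - l ≤ 0), show |m - l| = k - n by
      rw [abs_of_nonneg] <;> linarith]
    linarith
  by_cases hm_min : m ≤ k ∧ m ≤ l
  · have := mul_mul_le_second_difference hF hF' hB hm.1 hm_min.1 hm_min.2 hn.2 (by linarith)
    rw [abs_of_nonpos (by linarith : m - l ≤ 0), show |n - l| = k - m by
      rw [abs_of_nonneg] <;> linarith]
    linarith
  rw [not_and_or, not_le, not_le] at hn_min hm_min
  rcases le_total k l with hkl | hlk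
  · have hkn : k ≤ n := by rcases hn_min with h | h <;> linarith
    have hkm : k ≤ m := by rcases hm_min with h | h <;> linarith
    have := mul_mul_le_second_difference hF hF' hB hk.1 hkn hkm hl.2 (by linarith)
    rw [show |n - l| = m - k by rw [abs_of_nonpos] <;> linarith,
      show |m - l| = n - k by rw [abs_of_nonpos] <;> linarith]
    linarith
  · have hln : l ≤ n := by rcases hn_min with h | h <;> linarith
    have hlm : l ≤ m := by rcases hm_min with h | h <;> linarith
    have := mul_mul_le_second_difference hF hF' hB hl.1 hln hlm hk.2 (by linarith)
    rw [abs_of_nonneg (by linarith : 0 ≤ n - l), abs_of_nonneg (by linarith : 0 ≤ m - l)]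
    linarith

end SecondDifference

lemma abs_add_sub_sub_lt_two_of_floor_add_eq {a b c d : ℝ} (h : ⌊a⌋ + ⌊b⌋ = ⌊c⌋ + ⌊d⌋) :
    |c + d - a - b| < 2 := by
  have h' : (⌊a⌋ + ⌊b⌋ : ℝ) = ⌊c⌋ + ⌊d⌋ := by exact_mod_cast h
  rw [abs_lt]
  constructor <;>
    linarith [Int.floor_le a, Int.floor_le b, Int.floor_le c, Int.floor_le d,
      Int.lt_floor_add_one a, Int.lt_floor_add_one b, Int.lt_floor_add_one c,
      Int.lt_floor_add_one d]

noncomputable def latticePointsUnderHyperbola (N : ℕ) (c : ℝ) : Finset (ℕ × ℕ) :=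
  (range N ×ˢ range N).filter fun p => (p.1 * p.2 : ℝ) < c

lemma card_filter_mul_lt_le {h : ℕ} (hh : 0 < h) {c : ℝ} (hc : 0 ≤ c) (N : ℕ) :
    (#{d ∈ range N | (h * (d : ℕ) : ℝ) < c} : ℝ) ≤ c / h + 1 := by
  have hh' : (0 : ℝ) < h := by exact_mod_cast hh
  have hsub : {d ∈ range N | (h * (d : ℕ) : ℝ) < c} ⊆ range (⌊c / h⌋₊ + 1) := by
    intro d hd
    rw [mem_filter] at hd
    rw [mem_range, Nat.lt_succ_iff]
    exact Nat.le_floor ((le_div_iff₀' hh').2 hd.2.le)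
  calc (#{d ∈ range N | (h * (d : ℕ) : ℝ) < c} : ℝ) ≤ ⌊c / h⌋₊ + 1 := by
        exact_mod_cast (card_le_card hsub).trans (card_range _).le
    _ ≤ c / h + 1 := by gcongr; exact Nat.floor_le (by positivity)

/-- Dirichlet's count: the row `h = 0` contributes `N`, each row `h ≥ 1` at most `c / h + 1`. -/
lemma card_latticePointsUnderHyperbola_le (N : ℕ) {c : ℝ} (hc : 0 ≤ c) :
    (#(latticePointsUnderHyperbola N c) : ℝ) ≤ 2 * N + c * (1 + Real.log N) := by
  set row : ℕ → ℕ := fun h => #{d ∈ range N | (h * (d : ℕ) : ℝ) < c}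
  have hrows : #(latticePointsUnderHyperbola N c) = ∑ h ∈ range N, row h := by
    rw [latticePointsUnderHyperbola, card_filter, sum_product]
    simp_rw [← card_filter]
    rfl
  have hharmonic : ((harmonic N : ℚ) : ℝ) = ∑ i ∈ range N, ((i + 1 : ℕ) : ℝ)⁻¹ := by
    simp [harmonic]
  have hrow0 : (row 0 : ℝ) ≤ N := by exact_mod_cast (card_filter_le _ _).trans (card_range N).le
  calc (#(latticePointsUnderHyperbola N c) : ℝ) ≤ ∑ h ∈ range (N + 1), (row h : ℝ) := by
        rw [hrows]; push_cast
        exact sum_le_sum_of_subset_of_nonneg (range_subset_range.2 N.le_succ) (by simp)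
    _ = ∑ i ∈ range N, (row (i + 1) : ℝ) + row 0 := sum_range_succ' _ _
    _ ≤ ∑ i ∈ range N, (c * ((i + 1 : ℕ) : ℝ)⁻¹ + 1) + N := by
        gcongr with i
        simpa only [div_eq_mul_inv] using card_filter_mul_lt_le i.succ_pos hc N
    _ = c * harmonic N + N + N := by
        rw [sum_add_distrib, ← mul_sum, hharmonic]; simp
    _ ≤ c * (1 + Real.log N) + N + N := by gcongr; exact harmonic_le_one_add_log N
    _ = 2 * N + c * (1 + Real.log N) := by ring

def additiveEnergyQuadruples (N : ℕ) (g : ℕ → ℤ) : Finset (ℕ × ℕ × ℕ × ℕ) :=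
  (Icc 1 N ×ˢ Icc 1 N ×ˢ Icc 1 N ×ˢ Icc 1 N).filter fun q =>
    q.1 + q.2.1 = q.2.2.1 + q.2.2.2 ∧ g q.1 + g q.2.1 = g q.2.2.1 + g q.2.2.2

/-- A quadruple with `n + m = k + l` is determined, up to `16` choices, by `l`, `|n - l|` and
`|m - l|`. -/
lemma card_additiveEnergyQuadruples_le {N : ℕ} {g : ℕ → ℤ} {c : ℝ}
    (hc : ∀ q ∈ additiveEnergyQuadruples N g,
      |(q.1 : ℝ) - q.2.2.2| * |(q.2.1 : ℝ) - q.2.2.2| < c) :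
    #(additiveEnergyQuadruples N g) ≤ 16 * (N * #(latticePointsUnderHyperbola N c)) := by
  set f : ℕ × ℕ × ℕ × ℕ → ℕ × ℕ × ℕ := fun q =>
    (q.2.2.2, ((q.1 : ℤ) - q.2.2.2).natAbs, ((q.2.1 : ℤ) - q.2.2.2).natAbs)
  have habs : ∀ n l : ℕ, ((((n : ℤ) - l).natAbs : ℕ) : ℝ) = |(n : ℝ) - l| := fun n l => by
    push_cast [Nat.cast_natAbs]; rfl
  suffices #(additiveEnergyQuadruples N g) ≤ 16 * #(Icc 1 N ×ˢ latticePointsUnderHyperbola N c) by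
    simpa using this
  refine card_le_mul_card_image_of_maps_to (f := f) ?_ 16 ?_
  · rintro ⟨n, m, k, l⟩ hq
    have hlt := hc _ hq
    obtain ⟨hmem, -⟩ := mem_filter.1 hq
    simp only [mem_product, mem_Icc] at hmem
    simp only [f, latticePointsUnderHyperbola, mem_product, mem_filter, mem_Icc, mem_range,
      habs]
    exact ⟨by omega, ⟨by omega, by omega⟩, hlt⟩
  · rintro ⟨x, h, d⟩ -
    calc #{q ∈ additiveEnergyQuadruples N g | f q = (x, h, d)}
        ≤ #(({x + h, x - h} : Finset ℕ) ×ˢ ({x + d, x - d} : Finset ℕ) ×ˢ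
            ({x + h + d, x + h - d, x + d - h, x - h - d} : Finset ℕ) ×ˢ ({x} : Finset ℕ)) := by
          refine card_le_card fun q hq => ?_
          obtain ⟨hq, hfq⟩ := mem_filter.1 hq
          obtain ⟨-, hsum, -⟩ := mem_filter.1 hq
          obtain ⟨n, m, k, l⟩ := q
          simp only [f, Prod.mk.injEq] at hfq hsum
          simp only [mem_product, mem_insert, mem_singleton]
          omega
      _ ≤ 2 * (2 * (4 * 1)) := by
          simp only [card_product]
          gcongr
          · exact card_le_two
          · exact card_le_two
          · exact card_le_four
          · exact (card_singleton x).le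
      _ = 16 := rfl

lemma le_rpow_add_rpow_mul_log_div {N : ℕ} (hN : 2 ≤ N) {B ε : ℝ} (hB : 0 < B) (hε : 0 ≤ ε) :
    16 * (N * (2 * N + 2 / B * (1 + Real.log N))) ≤
      96 * ((N : ℝ) ^ ((2 : ℝ) + ε) + (N : ℝ) ^ ((1 : ℝ) + ε) * Real.log N / B) := by
  have hN1 : (1 : ℝ) ≤ N := by exact_mod_cast one_le_two.trans hN
  have hlog : 1 ≤ 2 * Real.log N := by
    have := Real.log_le_log two_pos (by exact_mod_cast hN : (2 : ℝ) ≤ N)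
    linarith [Real.log_two_gt_d9]
  have hsq : (N : ℝ) * N ≤ (N : ℝ) ^ ((2 : ℝ) + ε) := by
    calc (N : ℝ) * N = (N : ℝ) ^ (2 : ℝ) := by norm_cast; ring
      _ ≤ _ := Real.rpow_le_rpow_of_exponent_le hN1 (by linarith)
  have hlogN : (N : ℝ) * Real.log N / B ≤ (N : ℝ) ^ ((1 : ℝ) + ε) * Real.log N / B := by
    gcongr
    simpa using Real.rpow_le_rpow_of_exponent_le hN1 (by linarith : (1 : ℝ) ≤ 1 + ε)
  have hNB : (N : ℝ) / B ≤ 2 * ((N : ℝ) * Real.log N / B) := by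
    calc (N : ℝ) / B = N / B * 1 := (mul_one _).symm
      _ ≤ N / B * (2 * Real.log N) := by gcongr
      _ = 2 * ((N : ℝ) * Real.log N / B) := by ring
  have hexpand : 16 * (N * (2 * N + 2 / B * (1 + Real.log N))) =
      32 * ((N : ℝ) * N) + 32 * ((N : ℝ) / B) + 32 * ((N : ℝ) * Real.log N / B) := by ring
  rw [hexpand, mul_add]
  linarith [mul_self_nonneg (N : ℝ)]

lemma abs_mul_abs_lt_of_mem_additiveEnergyQuadruples {F : ℝ → ℝ} {N : ℕ} {B : ℝ} (hB : 0 < B)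
    (hF : ∀ t ∈ Set.Icc (1 : ℝ) N, DifferentiableAt ℝ F t)
    (hF' : ∀ t ∈ Set.Icc (1 : ℝ) N, DifferentiableAt ℝ (deriv F) t)
    (hBle : ∀ t ∈ Set.Icc (1 : ℝ) N, B ≤ deriv (deriv F) t)
    {q : ℕ × ℕ × ℕ × ℕ} (hq : q ∈ additiveEnergyQuadruples N fun n => ⌊F n⌋) :
    |(q.1 : ℝ) - q.2.2.2| * |(q.2.1 : ℝ) - q.2.2.2| < 2 / B := by
  obtain ⟨hmem, hsum, hfloor⟩ := mem_filter.1 hq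
  simp only [mem_product, mem_Icc] at hmem
  have hIcc : ∀ n : ℕ, 1 ≤ n ∧ n ≤ N → (n : ℝ) ∈ Set.Icc (1 : ℝ) N := fun n hn =>
    ⟨by exact_mod_cast hn.1, by exact_mod_cast hn.2⟩
  rw [lt_div_iff₀' hB, ← mul_assoc]
  exact (mul_abs_mul_abs_le_abs_second_difference hF hF' hBle (hIcc _ hmem.1) (hIcc _ hmem.2.1)
    (hIcc _ hmem.2.2.1) (hIcc _ hmem.2.2.2) (by exact_mod_cast hsum)).trans_lt
    (abs_add_sub_sub_lt_two_of_floor_add_eq hfloor)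

theorem stmt10 :
    ∀ ε : ℝ, 0 < ε → ε < 1 →
      ∃ C : ℝ, 0 < C ∧
        ∀ N : ℕ, 2 ≤ N →
          ∀ F : ℝ → ℝ, ContDiffOn ℝ 3 F (Set.Icc 1 N) →
            (∀ x ∈ Set.Icc (1 : ℝ) N, 0 < deriv F x) →
            (∀ x ∈ Set.Icc (1 : ℝ) N, 0 < iteratedDeriv 2 F x) →
            (∀ x ∈ Set.Icc (1 : ℝ) N, iteratedDeriv 3 F x < 0) →
            (((Finset.Icc 1 N ×ˢ Finset.Icc 1 N ×ˢ Finset.Icc 1 N ×ˢ Finset.Icc 1 N).filter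
                fun q => q.1 + q.2.1 = q.2.2.1 + q.2.2.2 ∧
                  ⌊F q.1⌋ + ⌊F q.2.1⌋ = ⌊F q.2.2.1⌋ + ⌊F q.2.2.2⌋).card : ℝ) ≤
              C * ((N : ℝ) ^ ((2 : ℝ) + ε) +
                (N : ℝ) ^ ((1 : ℝ) + ε) * Real.log N / iteratedDeriv 2 F N) := by
  intro ε hε _
  refine ⟨96, by norm_num, fun N hN F _ hF1 hF2 hF3 => ?_⟩
  have hNmem : (N : ℝ) ∈ Set.Icc (1 : ℝ) N := ⟨by exact_mod_cast one_le_two.trans hN, le_rfl⟩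
  set B := iteratedDeriv 2 F N
  have hB : 0 < B := hF2 N hNmem
  have hF2' : iteratedDeriv 2 F = deriv (deriv F) := by rw [iteratedDeriv_succ, iteratedDeriv_one]
  have hF : ∀ t ∈ Set.Icc (1 : ℝ) N, DifferentiableAt ℝ F t := fun t ht =>
    differentiableAt_of_deriv_ne_zero (hF1 t ht).ne'
  have hF' : ∀ t ∈ Set.Icc (1 : ℝ) N, DifferentiableAt ℝ (deriv F) t := fun t ht =>
    differentiableAt_of_deriv_ne_zero (hF2' ▸ hF2 t ht).ne'
  have hBle : ∀ t ∈ Set.Icc (1 : ℝ) N, B ≤ deriv (deriv F) t := fun t ht =>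
    hF2' ▸ (strictAntiOn_iteratedDeriv_two hF3).antitoneOn ht hNmem ht.2
  calc (#(additiveEnergyQuadruples N fun n => ⌊F n⌋) : ℝ)
      ≤ 16 * (N * #(latticePointsUnderHyperbola N (2 / B))) := by
        exact_mod_cast card_additiveEnergyQuadruples_le fun q hq =>
          abs_mul_abs_lt_of_mem_additiveEnergyQuadruples hB hF hF' hBle hq
    _ ≤ 16 * (N * (2 * N + 2 / B * (1 + Real.log N))) := by
        gcongr
        exact card_latticePointsUnderHyperbola_le N (by positivity)
    _ ≤ 96 * ((N : ℝ) ^ ((2 : ℝ) + ε) + (N : ℝ) ^ ((1 : ℝ) + ε) * Real.log N / B) :=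
        le_rpow_add_rpow_mul_log_div hN hB hε.le
end

section
/- Let A ∈ [1,2] be a real number and let ε ∈ (0,1). Then there exists a constant C(ε,A) > 0, depending only on ε and A, such that for all integers N ≥ 3, #{(n,m,k,l) ∈ {1,…,N}^4 : n + m = k + l and ⌊n(log n)^A⌋ + ⌊m(log m)^A⌋ = ⌊k(log k)^A⌋ + ⌊l(log l)^A⌋} ≤ C(ε,A)·N^{2+ε}·(log N)^{2−A}. -/
/-!
Write `ψ(x) = x (log x)^A`. For fixed `s`, the symmetric sum `ψ(s/2 + t) + ψ(s/2 - t)` grows at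
least like `t² / s` (as `ψ'' ≥ 1/x` once `log x ≥ 1`), so two pairs with the same sum `s` whose
values of `⌊ψ⌋` have the same sum satisfy `|(k - l)² - (n - m)²| < 8s`. Hence, for fixed `(n, m)`,
`|k - l|` lies within `O(N / (|n - m| + 1))` of `|n - m|`, and summing over `(n, m)` bounds the
energy by `O(N² log N)`, which is `O_ε(N^(2+ε) (log N)^(2-A))` because `A ≤ 2`.
-/

open scoped Classical

open Finset Real

noncomputable def mulLogRpow (A x : ℝ) : ℝ := x * log x ^ A

lemma hasDerivAt_mulLogRpow (A : ℝ) {x : ℝ} (hx : 1 < x) :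
    HasDerivAt (mulLogRpow A) (log x ^ A + A * log x ^ (A - 1)) x := by
  have hlog : HasDerivAt (fun y => log y ^ A) (A * log x ^ (A - 1) * x⁻¹) x :=
    (hasDerivAt_rpow_const (Or.inl (log_pos hx).ne')).comp x (hasDerivAt_log (by positivity))
  refine ((hasDerivAt_id x).mul hlog).congr_deriv ?_
  simp only [id]
  field_simp

lemma sub_le_rpow_sub_rpow {A u v : ℝ} (hA : 1 ≤ A) (hv : 1 ≤ v) (hvu : v ≤ u) :
    u - v ≤ u ^ A - v ^ A := by
  have hv1 : 1 ≤ v ^ (A - 1) := one_le_rpow hv (by linarith)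
  have hvu1 : v ^ (A - 1) ≤ u ^ (A - 1) := rpow_le_rpow (by linarith) hvu (by linarith)
  have hsplit : ∀ w : ℝ, 1 ≤ w → w ^ A = w ^ (A - 1) * w := fun w hw => by
    rw [← rpow_add_one (by positivity)]; ring_nf
  rw [hsplit u (hv.trans hvu), hsplit v hv]
  nlinarith

lemma sub_div_le_sub_deriv_mulLogRpow {A a b : ℝ} (hA : 1 ≤ A) (hb : 3 ≤ b) (hba : b ≤ a) :
    (a - b) / a ≤ (log a ^ A + A * log a ^ (A - 1)) - (log b ^ A + A * log b ^ (A - 1)) := by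
  have hlogb : 1 ≤ log b := by
    rw [le_log_iff_exp_le (by linarith)]; linarith [exp_one_lt_d9]
  have hlog : log b ≤ log a := log_le_log (by linarith) hba
  have hdiv : (a - b) / a ≤ log a - log b := by
    have ha : 0 < a := by linarith
    have := one_sub_inv_le_log_of_pos (x := a / b) (by positivity)
    rw [log_div ha.ne' (by positivity), inv_div] at this
    rwa [sub_div, div_self ha.ne']
  have hpow : log b ^ (A - 1) ≤ log a ^ (A - 1) := rpow_le_rpow (by linarith) hlog (by linarith)
  nlinarith [sub_le_rpow_sub_rpow hA hlogb hlog]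

lemma monotoneOn_mulLogRpow_symm_sub_sq {A : ℝ} (hA : 1 ≤ A) (c : ℝ) :
    MonotoneOn (fun t => mulLogRpow A (c + t) + mulLogRpow A (c - t) - t ^ 2 / (2 * c))
      (Set.Icc 0 (c - 3)) := by
  have hderiv : ∀ t ∈ Set.Icc 0 (c - 3), HasDerivAt
      (fun t => mulLogRpow A (c + t) + mulLogRpow A (c - t) - t ^ 2 / (2 * c))
      ((log (c + t) ^ A + A * log (c + t) ^ (A - 1))
        - (log (c - t) ^ A + A * log (c - t) ^ (A - 1)) - t / c) t := by
    rintro t ⟨ht0, htc⟩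
    have h₁ := (hasDerivAt_mulLogRpow A (x := c + t) (by linarith)).comp t
      ((hasDerivAt_id t).const_add c)
    have h₂ := (hasDerivAt_mulLogRpow A (x := c - t) (by linarith)).comp t
      ((hasDerivAt_id t).const_sub c)
    refine ((h₁.add h₂).sub ((hasDerivAt_pow 2 t).div_const (2 * c))).congr_deriv ?_
    field_simp
    ring
  refine monotoneOn_of_hasDerivWithinAt_nonneg (convex_Icc _ _)
    (fun t ht => (hderiv t ht).continuousAt.continuousWithinAt)
    (fun t ht => (hderiv t (interior_subset ht)).hasDerivWithinAt) ?_
  intro t ht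
  rw [interior_Icc] at ht
  obtain ⟨ht0, htc⟩ := ht
  have key := sub_div_le_sub_deriv_mulLogRpow hA (a := c + t) (b := c - t) (by linarith)
    (by linarith)
  have : t / c ≤ (c + t - (c - t)) / (c + t) := by
    rw [div_le_div_iff₀ (by linarith) (by linarith)]; nlinarith
  linarith

lemma abs_sq_sub_sq_le_mulLogRpow_symm {A c t t' : ℝ} (hA : 1 ≤ A)
    (ht : t ∈ Set.Icc 0 (c - 3)) (ht' : t' ∈ Set.Icc 0 (c - 3)) :
    |t ^ 2 - t' ^ 2| ≤ 2 * c * |mulLogRpow A (c + t) + mulLogRpow A (c - t)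
      - (mulLogRpow A (c + t') + mulLogRpow A (c - t'))| := by
  have hc : 0 < c := by linarith [ht.1, ht.2]
  have key : ∀ {u v}, u ∈ Set.Icc 0 (c - 3) → v ∈ Set.Icc 0 (c - 3) → u ≤ v →
      v ^ 2 - u ^ 2 ≤ 2 * c * (mulLogRpow A (c + v) + mulLogRpow A (c - v)
        - (mulLogRpow A (c + u) + mulLogRpow A (c - u))) := by
    intro u v hu hv huv
    have := monotoneOn_mulLogRpow_symm_sub_sq hA c hu hv huv
    simp only at this
    have e : ∀ w : ℝ, w ^ 2 / (2 * c) * (2 * c) = w ^ 2 := fun w => by field_simp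
    nlinarith [e u, e v]
  rcases le_total t t' with h | h
  · have := key ht ht' h
    rw [abs_sub_comm, abs_of_nonneg (by nlinarith [ht.1]), abs_sub_comm]
    exact this.trans (mul_le_mul_of_nonneg_left (le_abs_self _) (by positivity))
  · have := key ht' ht h
    rw [abs_of_nonneg (by nlinarith [ht'.1])]
    exact this.trans (mul_le_mul_of_nonneg_left (le_abs_self _) (by positivity))

lemma abs_sq_sub_sq_le_mulLogRpow_add {A p q p' q' : ℝ} (hA : 1 ≤ A) (hp : 3 ≤ p) (hq : 3 ≤ q)
    (hp' : 3 ≤ p') (hq' : 3 ≤ q') (hs : p + q = p' + q') :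
    |(p - q) ^ 2 - (p' - q') ^ 2| ≤ 4 * (p + q) *
      |mulLogRpow A p + mulLogRpow A q - (mulLogRpow A p' + mulLogRpow A q')| := by
  set c := (p + q) / 2 with hc
  have symm : ∀ x y, 3 ≤ x → 3 ≤ y → x + y = p + q →
      |x - y| / 2 ∈ Set.Icc 0 (c - 3) ∧
        mulLogRpow A x + mulLogRpow A y =
          mulLogRpow A (c + |x - y| / 2) + mulLogRpow A (c - |x - y| / 2) := by
    intro x y hx hy hxy
    rw [hc]
    refine ⟨⟨by positivity, ?_⟩, ?_⟩
    · rcases abs_cases (x - y) with ⟨h, _⟩ | ⟨h, _⟩ <;> rw [h] <;> linarith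
    · rcases abs_cases (x - y) with ⟨h, _⟩ | ⟨h, _⟩ <;> rw [h]
      · rw [show c + (x - y) / 2 = x by linarith, show c - (x - y) / 2 = y by linarith]
      · rw [show c + -(x - y) / 2 = y by linarith, show c - -(x - y) / 2 = x by linarith, add_comm]
  obtain ⟨ht, e⟩ := symm p q hp hq rfl
  obtain ⟨ht', e'⟩ := symm p' q' hp' hq' hs.symm
  have := abs_sq_sub_sq_le_mulLogRpow_symm hA ht ht'
  rw [show 2 * c = p + q by rw [hc]; ring] at this
  rw [e, e']
  have hsq : ∀ x y : ℝ, (x - y) ^ 2 = 4 * (|x - y| / 2) ^ 2 := fun x y => by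
    rw [div_pow, sq_abs]; ring
  rw [hsq p q, hsq p' q', ← mul_sub, abs_mul, abs_of_pos (by norm_num : (0:ℝ) < 4)]
  linarith

lemma abs_add_sub_add_lt_two_of_floor_add_eq {a b c d : ℝ} (h : ⌊a⌋ + ⌊b⌋ = ⌊c⌋ + ⌊d⌋) :
    |a + b - (c + d)| < 2 := by
  have h' : (⌊a⌋ : ℝ) + ⌊b⌋ = ⌊c⌋ + ⌊d⌋ := by exact_mod_cast h
  rw [abs_lt]
  constructor <;> linarith [Int.floor_le a, Int.floor_le b, Int.floor_le c, Int.floor_le d,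
    Int.lt_floor_add_one a, Int.lt_floor_add_one b, Int.lt_floor_add_one c, Int.lt_floor_add_one d]

lemma abs_sq_sub_sq_lt_of_floor_mulLogRpow_add_eq {A : ℝ} (hA : 1 ≤ A) {n m k l : ℕ}
    (hn : 3 ≤ n) (hm : 3 ≤ m) (hk : 3 ≤ k) (hl : 3 ≤ l) (hs : n + m = k + l)
    (hg : ⌊mulLogRpow A n⌋ + ⌊mulLogRpow A m⌋ = ⌊mulLogRpow A k⌋ + ⌊mulLogRpow A l⌋) :
    |((k : ℤ) - l) ^ 2 - ((n : ℤ) - m) ^ 2| < 8 * (n + m) := by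
  have hsR : (n : ℝ) + m = k + l := by exact_mod_cast hs
  have h := abs_sq_sub_sq_le_mulLogRpow_add hA (p := k) (q := l) (p' := n) (q' := m)
    (by exact_mod_cast hk) (by exact_mod_cast hl) (by exact_mod_cast hn) (by exact_mod_cast hm)
    hsR.symm
  have hgap := abs_add_sub_add_lt_two_of_floor_add_eq hg
  rw [abs_sub_comm] at hgap
  have hpos : (0 : ℝ) < 4 * (n + m) := by positivity
  have : |((k : ℝ) - l) ^ 2 - ((n : ℝ) - m) ^ 2| < 8 * (n + m) := by
    rw [← hsR] at h
    nlinarith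
  exact_mod_cast this

def energyQuadruples (g : ℕ → ℤ) (S : Finset ℕ) : Finset (ℕ × ℕ × ℕ × ℕ) :=
  (S ×ˢ S ×ˢ S ×ˢ S).filter fun q =>
    q.1 + q.2.1 = q.2.2.1 + q.2.2.2 ∧ g q.1 + g q.2.1 = g q.2.2.1 + g q.2.2.2

def energyFiber (g : ℕ → ℤ) (S : Finset ℕ) (n m : ℕ) : Finset ℕ :=
  S.filter fun k => ∃ l ∈ S, n + m = k + l ∧ g n + g m = g k + g l

lemma card_energyQuadruples_le_sum (g : ℕ → ℤ) (S : Finset ℕ) :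
    #(energyQuadruples g S) ≤ ∑ p ∈ S ×ˢ S, #(energyFiber g S p.1 p.2) := by
  rw [card_eq_sum_card_fiberwise (f := fun q => (q.1, q.2.1)) (t := S ×ˢ S)]
  · refine sum_le_sum fun p _ => card_le_card_of_injOn (fun q => q.2.2.1) ?_ ?_
    · rintro ⟨n, m, k, l⟩ hq
      simp only [energyQuadruples, coe_filter, mem_filter, mem_product,
        Set.mem_ofPred_eq] at hq
      obtain ⟨⟨⟨-, -, hk, hl⟩, hs, hg⟩, rfl, rfl⟩ := hq
      simp only [energyFiber, coe_filter, Set.mem_ofPred_eq]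
      exact ⟨hk, l, hl, hs, hg⟩
    · rintro ⟨n, m, k, l⟩ hq ⟨n', m', k', l'⟩ hq' (rfl : k = k')
      simp only [energyQuadruples, coe_filter, mem_filter, mem_product,
        Set.mem_ofPred_eq] at hq hq'
      obtain ⟨⟨-, hs, -⟩, rfl, rfl⟩ := hq
      obtain ⟨⟨-, hs', -⟩, -, -⟩ := hq'
      rw [show l = l' by omega]
  · rintro ⟨n, m, k, l⟩ hq
    simp only [energyQuadruples, coe_filter, mem_product, Set.mem_ofPred_eq] at hq
    simp only [coe_product, Set.mem_prod, mem_coe]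
    exact ⟨hq.1.1, hq.1.2.1⟩

lemma abs_abs_sub_abs_mul_abs_le {α : Type*} [CommRing α] [LinearOrder α] [IsStrictOrderedRing α]
    (x a : α) : |(|x| - |a|)| * |a| ≤ |x ^ 2 - a ^ 2| := by
  rw [← sq_abs x, ← sq_abs a, sq_sub_sq, abs_mul, abs_of_nonneg (by positivity : 0 ≤ |x| + |a|)]
  rw [mul_comm (|x| + |a|)]
  exact mul_le_mul_of_nonneg_left (by linarith [abs_nonneg x]) (abs_nonneg _)

lemma card_filter_abs_abs_sub_le (S : Finset ℕ) (s a : ℤ) {c : ℤ} (hc : 0 ≤ c) :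
    (#(S.filter fun k : ℕ => |(|2 * (k : ℤ) - s| - a)| ≤ c) : ℤ) ≤ 2 * (2 * c + 1) := by
  have hmaps : Set.MapsTo (fun k : ℕ => 2 * (k : ℤ) - s)
      ↑(S.filter fun k : ℕ => |(|2 * (k : ℤ) - s| - a)| ≤ c)
      ↑(Icc (a - c) (a + c) ∪ Icc (-a - c) (-a + c)) := by
    intro k hk
    simp only [coe_filter, Set.mem_ofPred_eq] at hk
    simp only [coe_union, coe_Icc, Set.mem_union, Set.mem_Icc]
    have := hk.2
    rw [abs_le] at this
    rcases abs_cases (2 * (k : ℤ) - s) with ⟨h, _⟩ | ⟨h, _⟩ <;> rw [h] at this <;> omega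
  have := card_le_card_of_injOn _ hmaps (fun k _ k' _ h => by simpa using h)
  have hu := card_union_le (Icc (a - c) (a + c)) (Icc (-a - c) (-a + c))
  rw [Int.card_Icc, Int.card_Icc] at hu
  omega

lemma card_energyFiber_floor_mulLogRpow_le {A : ℝ} (hA : 1 ≤ A) (N : ℕ) {n m : ℕ}
    (hn : 3 ≤ n) (hm : 3 ≤ m) :
    (#(energyFiber (fun j => ⌊mulLogRpow A j⌋) (Icc 1 N) n m) : ℝ) ≤
      6 + 36 * (n + m) / (|(n : ℝ) - m| + 1) := by
  set F := energyFiber (fun j => ⌊mulLogRpow A j⌋) (Icc 1 N) n m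
  set s : ℤ := n + m
  set a : ℤ := |(n : ℤ) - m| with ha
  -- `+ 1` keeps the divisor positive when `n = m`; the extra `s` in `9 s` pays for it via the
  -- crude bound `||x| - a| ≤ s`
  set c : ℤ := 9 * s / (a + 1)
  have ha0 : 0 ≤ a := abs_nonneg _
  have hsmall : #(F.filter fun k => ¬ (3 ≤ k ∧ 3 ≤ n + m - k)) ≤ 4 := by
    refine (card_le_card (t := {1, 2, n + m - 1, n + m - 2}) fun k hk => ?_).trans card_le_four
    simp only [F, energyFiber, mem_filter, mem_Icc] at hk
    simp only [mem_insert, mem_singleton]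
    omega
  have hlarge : F.filter (fun k => 3 ≤ k ∧ 3 ≤ n + m - k) ⊆
      (Icc 1 N).filter fun k : ℕ => |(|2 * (k : ℤ) - s| - a)| ≤ c := by
    intro k hk
    simp only [F, energyFiber, mem_filter] at hk ⊢
    obtain ⟨⟨hkI, l, hlI, hkl, hg⟩, hk3, hl3⟩ := hk
    refine ⟨hkI, Int.le_ediv_of_mul_le (by omega) ?_⟩
    have hx : 2 * (k : ℤ) - s = k - l := by omega
    have hcore := abs_sq_sub_sq_lt_of_floor_mulLogRpow_add_eq hA hn hm hk3 (by omega) hkl hg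
    have hmul := abs_abs_sub_abs_mul_abs_le ((k : ℤ) - l) ((n : ℤ) - m)
    have hle : |(|2 * (k : ℤ) - s| - a)| ≤ s := by
      simp only [mem_Icc] at hkI hlI
      exact abs_sub_le_of_nonneg_of_le (abs_nonneg _) (by rw [hx, abs_le]; omega) ha0
        (by rw [ha, abs_le]; omega)
    rw [hx] at hle ⊢
    nlinarith
  have hcount := card_filter_abs_abs_sub_le (Icc 1 N) s a (c := c) (by positivity)
  have hcR : (c : ℝ) ≤ 9 * (n + m) / (|(n : ℝ) - m| + 1) := by
    have hpos : (0 : ℝ) < |(n : ℝ) - m| + 1 := by positivity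
    rw [le_div_iff₀ hpos]
    have := Int.ediv_mul_le (9 * s) (b := a + 1) (by omega)
    have hcast : ((a : ℤ) : ℝ) = |(n : ℝ) - m| := by push_cast [ha]; rfl
    rw [← hcast]
    exact_mod_cast this
  have hF : #F ≤ 4 + #(F.filter fun k => 3 ≤ k ∧ 3 ≤ n + m - k) := by
    have := card_filter_add_card_filter_not (s := F) (p := fun k => 3 ≤ k ∧ 3 ≤ n + m - k)
    omega
  have hlargeR : (#(F.filter fun k => 3 ≤ k ∧ 3 ≤ n + m - k) : ℝ) ≤ 2 * (2 * c + 1) := by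
    exact_mod_cast (Int.ofNat_le.2 (card_le_card hlarge)).trans hcount
  have : (#F : ℝ) ≤ 4 + 2 * (2 * c + 1) := by
    have : (#F : ℝ) ≤ 4 + #(F.filter fun k => 3 ≤ k ∧ 3 ≤ n + m - k) := by exact_mod_cast hF
    linarith
  rw [mul_div_assoc] at hcR ⊢
  linarith

lemma sum_inv_abs_sub_add_one_le (N : ℕ) {n : ℕ} (hn : n ∈ Icc 1 N) :
    ∑ m ∈ Icc 1 N, 1 / (|(n : ℝ) - m| + 1) ≤ 2 * (1 + log N) := by
  have hmaps : ∀ m ∈ Icc 1 N, Int.natAbs ((n : ℤ) - m) ∈ range N := by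
    intro m hm
    simp only [mem_Icc, mem_range] at hn hm ⊢
    omega
  have hfiber : ∀ j, #((Icc 1 N).filter fun m : ℕ => Int.natAbs ((n : ℤ) - m) = j) ≤ 2 := by
    intro j
    refine (card_le_card (t := {n + j, n - j}) fun m hm => ?_).trans card_le_two
    simp only [mem_filter, mem_insert, mem_singleton] at hm ⊢
    omega
  calc ∑ m ∈ Icc 1 N, 1 / (|(n : ℝ) - m| + 1)
      = ∑ j ∈ range N, ∑ m ∈ Icc 1 N with Int.natAbs ((n : ℤ) - (m : ℕ)) = j,
          1 / ((Int.natAbs ((n : ℤ) - m) : ℝ) + 1) := by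
        rw [sum_fiberwise_of_maps_to hmaps]
        refine sum_congr rfl fun m _ => ?_
        rw [Nat.cast_natAbs]
        push_cast
        rfl
    _ = ∑ j ∈ range N,
          #((Icc 1 N).filter fun m : ℕ => Int.natAbs ((n : ℤ) - m) = j) * (1 / ((j : ℝ) + 1)) := by
        refine sum_congr rfl fun j _ => ?_
        rw [sum_congr rfl fun m hm => by rw [(mem_filter.1 hm).2], sum_const, nsmul_eq_mul]
    _ ≤ ∑ j ∈ range N, 2 * (1 / ((j : ℝ) + 1)) :=
        sum_le_sum fun j _ =>
          mul_le_mul_of_nonneg_right (by exact_mod_cast hfiber j) (by positivity)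
    _ = 2 * harmonic N := by
        rw [← mul_sum, harmonic]
        push_cast
        simp [one_div]
    _ ≤ 2 * (1 + log N) := by linarith [harmonic_le_one_add_log N]

lemma card_energyQuadruples_floor_mulLogRpow_le {A : ℝ} (hA : 1 ≤ A) (N : ℕ) :
    (#(energyQuadruples (fun j => ⌊mulLogRpow A j⌋) (Icc 1 N)) : ℝ) ≤
      10 * N ^ 2 + 144 * N ^ 2 * (1 + log N) := by
  set g : ℕ → ℤ := fun j => ⌊mulLogRpow A j⌋
  set I := Icc 1 N
  have hI : #I = N := by simp [I]
  have hbad : #((I ×ˢ I).filter fun p => p.1 < 3 ∨ p.2 < 3) ≤ 4 * N := by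
    have hsub : ((I ×ˢ I).filter fun p => p.1 < 3 ∨ p.2 < 3) ⊆ Icc 1 2 ×ˢ I ∪ I ×ˢ Icc 1 2 := by
      rintro ⟨n, m⟩ h
      simp only [I, mem_filter, mem_product, mem_union, mem_Icc] at h ⊢
      omega
    refine (card_le_card hsub).trans ((card_union_le _ _).trans ?_)
    simp only [card_product, hI, Nat.card_Icc]
    omega
  have htrivial : ∀ p : ℕ × ℕ, #(energyFiber g I p.1 p.2) ≤ N := fun p =>
    hI ▸ card_filter_le _ _
  have hgood : ∀ p ∈ (I ×ˢ I).filter (fun p => ¬ (p.1 < 3 ∨ p.2 < 3)),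
      (#(energyFiber g I p.1 p.2) : ℝ) ≤ 6 + 72 * N * (1 / (|(p.1 : ℝ) - p.2| + 1)) := by
    rintro ⟨n, m⟩ hp
    simp only [I, mem_filter, mem_product, mem_Icc] at hp
    have hnm : (n : ℝ) + m ≤ 2 * N := by
      have : n + m ≤ 2 * N := by omega
      exact_mod_cast this
    refine (card_energyFiber_floor_mulLogRpow_le hA N (by omega) (by omega)).trans ?_
    rw [mul_one_div]
    gcongr 6 + ?_ / _
    linarith
  have hharmonic : ∑ p ∈ I ×ˢ I, (1 / (|(p.1 : ℝ) - p.2| + 1)) ≤ N * (2 * (1 + log N)) := by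
    rw [sum_product]
    refine (sum_le_sum fun n hn => sum_inv_abs_sub_add_one_le N hn).trans ?_
    rw [sum_const, hI, nsmul_eq_mul]
  calc (#(energyQuadruples g I) : ℝ)
      ≤ ∑ p ∈ I ×ˢ I, (#(energyFiber g I p.1 p.2) : ℝ) := by
        exact_mod_cast card_energyQuadruples_le_sum g I
    _ = ∑ p ∈ (I ×ˢ I).filter (fun p => p.1 < 3 ∨ p.2 < 3), (#(energyFiber g I p.1 p.2) : ℝ)
        + ∑ p ∈ (I ×ˢ I).filter (fun p => ¬ (p.1 < 3 ∨ p.2 < 3)),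
            (#(energyFiber g I p.1 p.2) : ℝ) := (sum_filter_add_sum_filter_not _ _ _).symm
    _ ≤ ∑ p ∈ (I ×ˢ I).filter (fun p => p.1 < 3 ∨ p.2 < 3), (N : ℝ)
        + ∑ p ∈ I ×ˢ I, (6 + 72 * N * (1 / (|(p.1 : ℝ) - p.2| + 1))) := by
        gcongr with p hp
        · exact htrivial p
        · refine (sum_le_sum hgood).trans (sum_le_sum_of_subset_of_nonneg (filter_subset _ _) ?_)
          intro p _ _
          positivity
    _ ≤ 4 * N * N + (6 * N ^ 2 + 72 * N * (N * (2 * (1 + log N)))) := by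
        rw [sum_const, nsmul_eq_mul, sum_add_distrib, sum_const, nsmul_eq_mul, ← mul_sum,
          card_product, hI]
        have hbadR : (#((I ×ˢ I).filter fun p => p.1 < 3 ∨ p.2 < 3) : ℝ) ≤ 4 * N := by
          exact_mod_cast hbad
        have := mul_le_mul_of_nonneg_left hharmonic (by positivity : (0 : ℝ) ≤ 72 * N)
        push_cast
        nlinarith
    _ = 10 * N ^ 2 + 144 * N ^ 2 * (1 + log N) := by ring

theorem stmt11_general (A : ℝ) (hA1 : 1 ≤ A) (hA2 : A ≤ 2) (ε : ℝ) (hε0 : 0 < ε) :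
    ∃ C : ℝ, 0 < C ∧
      ∀ N : ℕ, 3 ≤ N →
        (((Finset.Icc 1 N ×ˢ Finset.Icc 1 N ×ˢ Finset.Icc 1 N ×ˢ Finset.Icc 1 N).filter
            fun q => q.1 + q.2.1 = q.2.2.1 + q.2.2.2 ∧
              ⌊(q.1 : ℝ) * Real.log q.1 ^ A⌋ + ⌊(q.2.1 : ℝ) * Real.log q.2.1 ^ A⌋ =
                ⌊(q.2.2.1 : ℝ) * Real.log q.2.2.1 ^ A⌋ +
                  ⌊(q.2.2.2 : ℝ) * Real.log q.2.2.2 ^ A⌋).card : ℝ) ≤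
          C * (N : ℝ) ^ ((2 : ℝ) + ε) * Real.log N ^ ((2 : ℝ) - A) := by
  refine ⟨298 / ε, by positivity, fun N hN => ?_⟩
  have hN0 : (0 : ℝ) < N := by positivity
  have hlog : 1 ≤ log N := by
    have : (3 : ℝ) ≤ N := by exact_mod_cast hN
    rw [le_log_iff_exp_le hN0]
    linarith [exp_one_lt_d9]
  calc _ ≤ 10 * (N : ℝ) ^ 2 + 144 * N ^ 2 * (1 + log N) :=
        card_energyQuadruples_floor_mulLogRpow_le hA1 N
    _ ≤ 298 * N ^ 2 * log N := by nlinarith [sq_nonneg (N : ℝ)]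
    _ ≤ 298 * N ^ 2 * (N ^ ε / ε) := by gcongr; exact log_le_rpow_div hN0.le hε0
    _ = 298 / ε * N ^ ((2 : ℝ) + ε) := by rw [rpow_add hN0, rpow_two]; ring
    _ ≤ 298 / ε * N ^ ((2 : ℝ) + ε) * log N ^ ((2 : ℝ) - A) :=
        le_mul_of_one_le_right (by positivity) (one_le_rpow hlog (by linarith))

theorem stmt11 (A : ℝ) (hA1 : 1 ≤ A) (hA2 : A ≤ 2) (ε : ℝ) (hε0 : 0 < ε) (hε1 : ε < 1) :
    ∃ C : ℝ, 0 < C ∧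
      ∀ N : ℕ, 3 ≤ N →
        (((Finset.Icc 1 N ×ˢ Finset.Icc 1 N ×ˢ Finset.Icc 1 N ×ˢ Finset.Icc 1 N).filter
            fun q => q.1 + q.2.1 = q.2.2.1 + q.2.2.2 ∧
              ⌊(q.1 : ℝ) * Real.log q.1 ^ A⌋ + ⌊(q.2.1 : ℝ) * Real.log q.2.1 ^ A⌋ =
                ⌊(q.2.2.1 : ℝ) * Real.log q.2.2.1 ^ A⌋ +
                  ⌊(q.2.2.2 : ℝ) * Real.log q.2.2.2 ^ A⌋).card : ℝ) ≤
          C * (N : ℝ) ^ ((2 : ℝ) + ε) * Real.log N ^ ((2 : ℝ) - A) :=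
  stmt11_general A hA1 hA2 ε hε0
end

section
/- Let d ≥ 2 be an integer, let (a_n^{(1)}), …, (a_n^{(d)}) be strictly increasing sequences of positive integers, let s > 0 be real, and let N be a positive integer with N ≥ (2s)^d. For α = (α₁,…,α_d) ∈ ℝ^d define R_{2,2}^{(d)}(s,α,N) = (1/N)·#{(m,n) : 1 ≤ m ≠ n ≤ N, ( Σ_{i=1}^d ‖α_i·(a_m^{(i)} − a_n^{(i)})‖² )^{1/2} ≤ s·N^{−1/d}}. Then ∫_{[0,1)^d} R_{2,2}^{(d)}(s,α,N) dα = ω_d·s^d·(N−1)/N, where ω_d is the Lebesgue volume of the Euclidean unit ball in ℝ^d. -/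
open MeasureTheory
open scoped Classical

/-- Distance from a real number to the nearest integer. -/
noncomputable def nidist (x : ℝ) : ℝ := |x - (round x : ℝ)|

/-- Pair correlation statistic `R_{2,2}^{(d)}(s, α, N)` with respect to the Euclidean norm. -/
noncomputable def R2twoA (d : ℕ) (a : Fin d → ℕ → ℕ) (s : ℝ) (N : ℕ) (α : Fin d → ℝ) : ℝ :=
  (((Finset.Icc 1 N ×ˢ Finset.Icc 1 N).filter fun p =>
      p.1 ≠ p.2 ∧ Real.sqrt (∑ i, nidist (α i * ((a i p.1 : ℝ) - (a i p.2 : ℝ))) ^ 2) ≤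
        s / (N : ℝ) ^ ((1 : ℝ) / d)).card : ℝ) / N


/-! Fix a pair `m ≠ n` and put `k i = a i m - a i n ≠ 0`, `r = s / N ^ (1 / d)`. The map
`α ↦ (α i * k i mod 1)ᵢ` pushes Lebesgue measure on `[0,1)^d` forward to Haar measure on the torus
`(ℝ/ℤ)^d`, so the pair contributes the Haar measure of `{y | ∑ i, ‖y i‖ ^ 2 ≤ r ^ 2}`. Since
`N ≥ (2s)^d` forces `r ≤ 1/2`, this set lifts to the Euclidean ball of radius `r` inside the
fundamental domain `(-1/2, 1/2]^d`, of volume `ω_d r^d = ω_d s^d / N`. There are `N (N - 1)`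
pairs. -/

open Set Metric

lemma nidist_eq_norm (x : ℝ) : nidist x = ‖(x : UnitAddCircle)‖ := by
  rw [UnitAddCircle.norm_eq, nidist]

@[fun_prop]
lemma continuous_nidist : Continuous nidist := by
  rw [show nidist = fun x : ℝ => ‖(x : UnitAddCircle)‖ from funext nidist_eq_norm]
  exact continuous_norm.comp (AddCircle.continuous_mk' 1)

variable {ι : Type*} [Fintype ι]

theorem volume_sum_sq_norm_le_unitAddCircle {r : ℝ} (hr0 : 0 ≤ r) (hr : r ≤ 1 / 2) :
    volume {y : ι → UnitAddCircle | ∑ i, ‖y i‖ ^ 2 ≤ r ^ 2} =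
      ENNReal.ofReal (r ^ Fintype.card ι) * volume (ball (0 : EuclideanSpace ℝ ι) 1) := by
  set cube : Set (ι → ℝ) := univ.pi fun _ => Ioc (-(1 / 2)) (1 / 2)
  set B : Set (ι → ℝ) := {x | ∑ i, x i ^ 2 ≤ r ^ 2}
  have hmk : MeasurePreserving (fun (x : ι → ℝ) i => (x i : UnitAddCircle))
      (volume.restrict cube) volume := by
    rw [volume_pi, volume_pi, Measure.restrict_pi_pi]
    refine measurePreserving_pi _ _ fun _ => ?_
    have h := UnitAddCircle.measurePreserving_mk (-(1 / 2))
    rwa [show -(1 / 2 : ℝ) + 1 = 1 / 2 by norm_num] at h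
  have hS : MeasurableSet {y : ι → UnitAddCircle | ∑ i, ‖y i‖ ^ 2 ≤ r ^ 2} :=
    (isClosed_le (by fun_prop) continuous_const).measurableSet
  have hpre : (fun (x : ι → ℝ) i => (x i : UnitAddCircle)) ⁻¹'
      {y | ∑ i, ‖y i‖ ^ 2 ≤ r ^ 2} ∩ cube = B ∩ cube := by
    ext x
    simp only [mem_inter_iff, mem_preimage, mem_ofPred_eq, and_congr_left_iff]
    intro hx
    rw [mem_univ_pi] at hx
    have hnorm (i : ι) : ‖(x i : UnitAddCircle)‖ ^ 2 = x i ^ 2 := by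
      rw [(AddCircle.norm_coe_eq_abs_iff _ one_ne_zero).2, sq_abs]
      simpa using abs_le.2 ⟨(hx i).1.le, (hx i).2⟩
    simp only [hnorm, B, mem_ofPred_eq]
  have hB : B ⊆ Icc (fun _ => -(1 / 2)) (fun _ => 1 / 2) := fun x hx => by
    have hxi (i : ι) := abs_le_of_sq_le_sq' ((Finset.single_le_sum (fun j _ => sq_nonneg (x j))
      (Finset.mem_univ i)).trans hx) hr0
    exact ⟨fun i => by linarith [hxi i], fun i => by linarith [hxi i]⟩
  calc _ = volume.restrict cube ((fun (x : ι → ℝ) i => (x i : UnitAddCircle)) ⁻¹'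
          {y | ∑ i, ‖y i‖ ^ 2 ≤ r ^ 2}) := (hmk.measure_preimage hS.nullMeasurableSet).symm
    _ = volume (B ∩ Icc (fun _ => -(1 / 2)) (fun _ => 1 / 2)) := by
      rw [Measure.restrict_apply (hmk.measurable hS), hpre, volume_pi]
      exact measure_congr (ae_eq_set_inter ae_eq_rfl Measure.univ_pi_Ioc_ae_eq_Icc)
    _ = volume (closedBall (0 : EuclideanSpace ℝ ι) r) := by
      rw [inter_eq_left.2 hB, ← (PiLp.volume_preserving_toLp ι).measure_preimage
        measurableSet_closedBall.nullMeasurableSet, EuclideanSpace.closedBall_zero_eq r hr0]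
      rfl
    _ = _ := by rw [Measure.addHaar_closedBall _ _ hr0, finrank_euclideanSpace]

theorem measurePreserving_coe_mul_unitCube (k : ι → ℤ) (hk : ∀ i, k i ≠ 0) :
    MeasurePreserving (fun (α : ι → ℝ) i => ((α i * k i : ℝ) : UnitAddCircle))
      (volume.restrict (univ.pi fun _ => Ico 0 1)) volume := by
  rw [volume_pi, volume_pi, Measure.restrict_pi_pi]
  refine measurePreserving_pi _ _ (f := fun i x => ((x * k i : ℝ) : UnitAddCircle)) fun i => ?_
  have hmk : MeasurePreserving ((↑) : ℝ → UnitAddCircle) (volume.restrict (Ico 0 1)) volume := by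
    have h := UnitAddCircle.measurePreserving_mk 0
    rwa [zero_add, ← Measure.restrict_congr_set Ico_ae_eq_Ioc] at h
  have hcomp : (fun x : ℝ => ((x * k i : ℝ) : UnitAddCircle)) =
      (fun y : UnitAddCircle => k i • y) ∘ (↑) := by
    funext x
    rw [Function.comp_apply, ← AddCircle.coe_zsmul, zsmul_eq_mul, mul_comm]
  rw [hcomp]
  exact (Measure.measurePreserving_zsmul volume (hk i)).comp hmk

theorem integrableOn_unitCube_indicator_nidist_le (c : ι → ℝ) (r : ℝ) :
    IntegrableOn ({α : ι → ℝ | √(∑ i, nidist (α i * c i) ^ 2) ≤ r}.indicator (1 : (ι → ℝ) → ℝ))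
      (univ.pi fun _ => Ico 0 1) :=
  (integrableOn_const (C := (1 : ℝ)) (by simp [Real.volume_pi_Ico])).indicator
    (isClosed_le (by fun_prop) continuous_const).measurableSet

theorem setIntegral_unitCube_indicator_nidist_le (k : ι → ℤ) (hk : ∀ i, k i ≠ 0) {r : ℝ}
    (hr0 : 0 ≤ r) (hr : r ≤ 1 / 2) :
    ∫ α in univ.pi fun _ => Ico 0 1,
        {α : ι → ℝ | √(∑ i, nidist (α i * k i) ^ 2) ≤ r}.indicator 1 α =
      r ^ Fintype.card ι * (volume (ball (0 : EuclideanSpace ℝ ι) 1)).toReal := by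
  have hS : MeasurableSet {y : ι → UnitAddCircle | ∑ i, ‖y i‖ ^ 2 ≤ r ^ 2} :=
    (isClosed_le (by fun_prop) continuous_const).measurableSet
  have hset : {α : ι → ℝ | √(∑ i, nidist (α i * k i) ^ 2) ≤ r} =
      (fun α i => ((α i * k i : ℝ) : UnitAddCircle)) ⁻¹' {y | ∑ i, ‖y i‖ ^ 2 ≤ r ^ 2} := by
    ext α
    simp only [mem_ofPred_eq, mem_preimage, Real.sqrt_le_left hr0, nidist_eq_norm]
  have hmp := measurePreserving_coe_mul_unitCube k hk
  rw [hset, integral_indicator_one (hmp.measurable hS), measureReal_def,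
    hmp.measure_preimage hS.nullMeasurableSet, volume_sum_sq_norm_le_unitAddCircle hr0 hr,
    ENNReal.toReal_mul, ENNReal.toReal_ofReal (by positivity)]

lemma div_rpow_one_div_pow {N : ℝ} (s : ℝ) (hN : 0 ≤ N) {d : ℕ} (hd : d ≠ 0) :
    (s / N ^ ((1 : ℝ) / d)) ^ d = s ^ d / N := by
  rw [div_pow, one_div, Real.rpow_inv_natCast_pow hN hd]

lemma div_rpow_one_div_le_half {N s : ℝ} (hs : 0 ≤ s) {d : ℕ} (hd : d ≠ 0)
    (hN : (2 * s) ^ d ≤ N) : s / N ^ ((1 : ℝ) / d) ≤ 1 / 2 := by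
  have hN0 : 0 ≤ N := (by positivity : (0 : ℝ) ≤ (2 * s) ^ d).trans hN
  have h2s : 2 * s ≤ N ^ ((1 : ℝ) / d) := by
    rwa [← pow_le_pow_iff_left₀ (by positivity) (by positivity) hd, one_div,
      Real.rpow_inv_natCast_pow hN0 hd]
  exact div_le_of_le_mul₀ (by positivity) (by norm_num) (by linarith)

lemma R2twoA_eq_sum_indicator (d : ℕ) (a : Fin d → ℕ → ℕ) (s : ℝ) (N : ℕ) (α : Fin d → ℝ) :
    R2twoA d a s N α = (∑ p ∈ (Finset.Icc 1 N).offDiag,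
      {α : Fin d → ℝ | √(∑ i, nidist (α i * ((a i p.1 : ℝ) - a i p.2)) ^ 2) ≤
        s / (N : ℝ) ^ ((1 : ℝ) / d)}.indicator 1 α) / N := by
  have hoff : {p ∈ Finset.Icc 1 N ×ˢ Finset.Icc 1 N | p.1 ≠ p.2} = (Finset.Icc 1 N).offDiag := by
    ext p
    simp only [Finset.mem_filter, Finset.mem_product, Finset.mem_offDiag, and_assoc]
  rw [R2twoA, ← Finset.filter_filter, hoff, Finset.natCast_card_filter]
  simp only [indicator_apply, mem_ofPred_eq, Pi.one_apply]

theorem stmt16_general (d : ℕ) (hd : 2 ≤ d) (a : Fin d → ℕ → ℕ)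
    (hmono : ∀ i, StrictMono (a i))
    (s : ℝ) (hs : 0 < s) (N : ℕ) (hN0 : 0 < N) (hN : (2 * s) ^ d ≤ (N : ℝ)) :
    ∫ α in Set.univ.pi fun _ : Fin d => Set.Ico (0 : ℝ) 1,
        R2twoA d a s N α =
      (volume (Metric.ball (0 : EuclideanSpace ℝ (Fin d)) 1)).toReal * s ^ d *
        ((N : ℝ) - 1) / N := by
  have hd0 : d ≠ 0 := by omega
  set r := s / (N : ℝ) ^ ((1 : ℝ) / d)
  have hr0 : 0 ≤ r := by positivity
  have hr : r ≤ 1 / 2 := div_rpow_one_div_le_half hs.le hd0 hN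
  have hpair : ∀ p ∈ (Finset.Icc 1 N).offDiag,
      ∫ α in univ.pi fun _ => Ico 0 1,
        {α : Fin d → ℝ | √(∑ i, nidist (α i * ((a i p.1 : ℝ) - a i p.2)) ^ 2) ≤ r}.indicator 1 α =
        r ^ d * (volume (ball (0 : EuclideanSpace ℝ (Fin d)) 1)).toReal := by
    intro p hp
    have hk (i : Fin d) : ((a i p.1 : ℤ) - a i p.2) ≠ 0 :=
      sub_ne_zero.2 <| Nat.cast_injective.ne <| (hmono i).injective.ne (Finset.mem_offDiag.1 hp).2.2
    simpa using setIntegral_unitCube_indicator_nidist_le _ hk hr0 hr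
  simp_rw [R2twoA_eq_sum_indicator]
  rw [integral_div,
    integral_finsetSum _ fun p _ => integrableOn_unitCube_indicator_nidist_le _ r,
    Finset.sum_congr rfl hpair, Finset.sum_const, Finset.offDiag_card, Nat.card_Icc,
    add_tsub_cancel_right, nsmul_eq_mul, Nat.cast_sub (Nat.le_mul_self N),
    div_rpow_one_div_pow s (Nat.cast_nonneg N) hd0]
  push_cast
  field_simp

theorem stmt16 (d : ℕ) (hd : 2 ≤ d) (a : Fin d → ℕ → ℕ)
    (hmono : ∀ i, StrictMono (a i)) (hpos : ∀ i n, 0 < a i n)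
    (s : ℝ) (hs : 0 < s) (N : ℕ) (hN0 : 0 < N) (hN : (2 * s) ^ d ≤ (N : ℝ)) :
    ∫ α in Set.univ.pi fun _ : Fin d => Set.Ico (0 : ℝ) 1,
        R2twoA d a s N α =
      (volume (Metric.ball (0 : EuclideanSpace ℝ (Fin d)) 1)).toReal * s ^ d *
        ((N : ℝ) - 1) / N :=
  stmt16_general d hd a hmono s hs N hN0 hN
end
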